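/- For each k = 1,…,n there exist positive integers α_S, indexed by the k-element subsets S of {1,…,n} with 1 ∈ S, such that in R′ one has n·σ_k = ∑_S α_S · \overline{x_{w(S)}}, where w(S) is the word listing the elements of S in increasing order; that is, n·σ_k is a linear combination with positive integer coefficients of the orbit polynomials \overline{x_1x_{i(2)}⋯x_{i(k)}} with 1 < i(2) < ⋯ < i(k) ≤ n. -/

import Mathlib

open Finset

/-- The `k`-th elementary polynomial `σ_k` in the noncommuting variables
`x_1, …, x_n` of the free algebra `K⟨x_1,…,x_n⟩`. -/
noncomputable def elemPoly (K : Type*) [Field K] (n k : ℕ) : FreeAlgebra K (Fin n) :=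
  ∑ s ∈ Finset.univ.powersetCard k, ((s.sort (· ≤ ·)).map (FreeAlgebra.ι K)).prod

/-- The relation on the free algebra identifying `x_i * σ_k` with `σ_k * x_i`
for `1 ≤ i, k ≤ n`; the quotient `R′ = P/I` by the two-sided ideal `I` generated
by the commutators `[x_i, σ_k]` is `RingQuot` of this relation. -/
noncomputable def commRel (K : Type*) [Field K] (n : ℕ) :
    FreeAlgebra K (Fin n) → FreeAlgebra K (Fin n) → Prop :=
  fun a b => ∃ (i : Fin n) (k : ℕ), 1 ≤ k ∧ k ≤ n ∧
    a = FreeAlgebra.ι K i * elemPoly K n k ∧ b = elemPoly K n k * FreeAlgebra.ι K i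

/-- The quotient ring `R′ = P/I`. -/
noncomputable abbrev Rquot (K : Type*) [Field K] (n : ℕ) := RingQuot (commRel K n)

/-- The quotient map `P → R′`. -/
noncomputable def mkR (K : Type*) [Field K] (n : ℕ) :
    FreeAlgebra K (Fin n) →ₐ[K] Rquot K n :=
  RingQuot.mkAlgHom K (commRel K n)

/-- The image in `R′` of the generator `x_i`. -/
noncomputable def XR (K : Type*) [Field K] (n : ℕ) (i : Fin n) : Rquot K n :=
  mkR K n (FreeAlgebra.ι K i)

/-- The generator of the group `G` of circular permutations, acting as the
`K`-algebra automorphism of the free algebra sending `x_i` to `x_{i+1}` (mod `n`). -/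
noncomputable def rotHom (K : Type*) [Field K] (n : ℕ) :
    FreeAlgebra K (Fin n) →ₐ[K] FreeAlgebra K (Fin n) :=
  FreeAlgebra.lift K fun i => FreeAlgebra.ι K (finRotate n i)

/-- The monomial `x_w = x_{i(1)} ⋯ x_{i(d)}` of a word `w`. -/
noncomputable def wordMonomial (K : Type*) [Field K] (n : ℕ) (w : List (Fin n)) :
    FreeAlgebra K (Fin n) :=
  (w.map (FreeAlgebra.ι K)).prod

/-- The orbit polynomial `\overline{x_w} = ∑_{g ∈ G} (x_w)^g` of a word `w`
(the group `G` of circular permutations has order `n`). -/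
noncomputable def orbitPoly (K : Type*) [Field K] (n : ℕ) (w : List (Fin n)) :
    FreeAlgebra K (Fin n) :=
  ∑ m ∈ Finset.range n, (⇑(rotHom K n))^[m] (wordMonomial K n w)

/-!
The rotation `g` fixes the image of `σ_k` in `R′`. Splitting off the last variable,
`σ_k = e′_k + e′_{k-1} x_n` with `e′` the elementary polynomials in `x_1, …, x_{n-1}`,
so `σ_k^g = e_k + e_{k-1} x_1` with `e` those in `x_2, …, x_n`, while splitting off the
first variable gives `σ_k = e_k + x_1 e_{k-1}`. In `R′` the variable `x_1` commutes with
every `e_j`, by induction on `j` from `e_j = σ_j - x_1 e_{j-1}`. Hence `g` descends to `R′`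
and `n·σ_k = ∑_{g ∈ G} σ_k^g`.

The right-hand side is the sum of the orbit polynomials of the increasing words of all
`k`-sets `T`. Translating `T` by `-min T` keeps its word increasing and does not change the
orbit, so `α_S` is the number of `k`-sets `T` with `T - min T = S`; it is positive since
`T = S` is one.
-/

namespace Finset

theorem sort_insert_of_forall_lt {α : Type*} [LinearOrder α] {s : Finset α} {a : α}
    (h : ∀ b ∈ s, b < a) : (insert a s).sort = s.sort ++ [a] := by
  have hnodup : (s.sort ++ [a]).Nodup :=
    List.nodup_append.2 ⟨s.sort_nodup _, List.nodup_singleton a, fun b hb c hc => by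
      simp only [List.mem_singleton] at hc; exact hc ▸ (h b (by simpa using hb)).ne⟩
  have hset : insert a s = (s.sort ++ [a]).toFinset := by ext; simp
  rw [hset, List.toFinset_sort _ hnodup, List.pairwise_append]
  exact ⟨s.pairwise_sort _, by simp, fun b hb c hc => by
    simp only [List.mem_singleton] at hc; exact hc ▸ (h b (by simpa using hb)).le⟩

theorem sum_powersetCard_succ_insert {α M : Type*} [DecidableEq α] [AddCommMonoid M]
    {s : Finset α} {a : α} (ha : a ∉ s) (k : ℕ) (f : Finset α → M) :
    ∑ t ∈ (insert a s).powersetCard (k + 1), f t =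
      ∑ t ∈ s.powersetCard (k + 1), f t + ∑ t ∈ s.powersetCard k, f (insert a t) := by
  rw [powersetCard_succ_insert ha, sum_union, sum_image]
  · exact insert_erase_invOn.2.injOn.mono fun t ht ↦ notMem_mono (mem_powersetCard.1 ht).1 ha
  · aesop (add simp [disjoint_left, insert_subset_iff, mem_powersetCard])

end Finset

section Words

variable (K : Type*) [Field K] {n : ℕ}

theorem wordMonomial_cons (a : Fin n) (w : List (Fin n)) :
    wordMonomial K n (a :: w) = FreeAlgebra.ι K a * wordMonomial K n w := by
  simp [wordMonomial]

theorem wordMonomial_append (v w : List (Fin n)) :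
    wordMonomial K n (v ++ w) = wordMonomial K n v * wordMonomial K n w := by
  simp [wordMonomial]

theorem rotHom_wordMonomial (w : List (Fin n)) :
    rotHom K n (wordMonomial K n w) = wordMonomial K n (w.map (finRotate n)) := by
  simp [wordMonomial, rotHom, map_list_prod, Function.comp_def]

theorem rotHom_iterate_wordMonomial (m : ℕ) (w : List (Fin n)) :
    (rotHom K n)^[m] (wordMonomial K n w) = wordMonomial K n (w.map (finRotate n)^[m]) := by
  induction m generalizing w with
  | zero => simp
  | succ m ih => rw [Function.iterate_succ_apply, rotHom_wordMonomial, ih, List.map_map,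
      ← Function.iterate_succ]

theorem orbitPoly_eq_sum_map_add [NeZero n] (w : List (Fin n)) :
    orbitPoly K n w = ∑ c : Fin n, wordMonomial K n (w.map (· + c)) := by
  rw [orbitPoly, ← Fin.sum_univ_eq_sum_range]
  refine sum_congr rfl fun c _ => ?_
  rw [rotHom_iterate_wordMonomial, ← finCycle_eq_finRotate_iterate]
  rfl

theorem orbitPoly_map_add [NeZero n] (w : List (Fin n)) (c : Fin n) :
    orbitPoly K n (w.map (· + c)) = orbitPoly K n w := by
  simp only [orbitPoly_eq_sum_map_add, List.map_map, Function.comp_def, add_assoc]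
  exact Equiv.sum_comp (Equiv.addLeft c) fun d => wordMonomial K n (w.map (· + d))

end Words

section ElemPolyOn

variable (K : Type*) [Field K] {n : ℕ}

noncomputable def elemPolyOn (A : Finset (Fin n)) (k : ℕ) : FreeAlgebra K (Fin n) :=
  ∑ s ∈ A.powersetCard k, wordMonomial K n s.sort

theorem elemPoly_eq_elemPolyOn_univ (k : ℕ) : elemPoly K n k = elemPolyOn K univ k := rfl

@[simp]
theorem elemPolyOn_zero (A : Finset (Fin n)) : elemPolyOn K A 0 = 1 := by
  simp [elemPolyOn, wordMonomial]

theorem elemPolyOn_of_card_lt {A : Finset (Fin n)} {k : ℕ} (h : A.card < k) :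
    elemPolyOn K A k = 0 := by
  rw [elemPolyOn, powersetCard_eq_empty.2 h, sum_empty]

theorem elemPolyOn_insert_of_forall_gt {A : Finset (Fin n)} {a : Fin n} (ha : ∀ b ∈ A, a < b)
    (k : ℕ) :
    elemPolyOn K (insert a A) (k + 1) =
      elemPolyOn K A (k + 1) + FreeAlgebra.ι K a * elemPolyOn K A k := by
  rw [elemPolyOn, sum_powersetCard_succ_insert (fun h => (ha a h).false), elemPolyOn,
    elemPolyOn, mul_sum]
  congr 1
  refine sum_congr rfl fun s hs => ?_
  have hs := (mem_powersetCard.1 hs).1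
  rw [sort_insert _ (fun b hb => (ha b (hs hb)).le) (fun h => (ha a (hs h)).false),
    wordMonomial_cons]

theorem elemPolyOn_insert_of_forall_lt {A : Finset (Fin n)} {a : Fin n} (ha : ∀ b ∈ A, b < a)
    (k : ℕ) :
    elemPolyOn K (insert a A) (k + 1) =
      elemPolyOn K A (k + 1) + elemPolyOn K A k * FreeAlgebra.ι K a := by
  rw [elemPolyOn, sum_powersetCard_succ_insert (fun h => (ha a h).false), elemPolyOn,
    elemPolyOn, sum_mul]
  congr 1
  refine sum_congr rfl fun s hs => ?_
  rw [sort_insert_of_forall_lt fun b hb => ha b ((mem_powersetCard.1 hs).1 hb),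
    wordMonomial_append]
  simp [wordMonomial]

theorem lift_elemPolyOn_map (f : Fin n ↪ Fin n) {A : Finset (Fin n)} (hf : StrictMonoOn f A)
    (k : ℕ) :
    FreeAlgebra.lift K (FreeAlgebra.ι K ∘ f) (elemPolyOn K A k) = elemPolyOn K (A.map f) k := by
  rw [elemPolyOn, elemPolyOn, map_sum, powersetCard_map, sum_map]
  refine sum_congr rfl fun s hs => ?_
  rw [RelEmbedding.coe_toEmbedding, mapEmbedding_apply,
    ← (hf.mono (mem_powersetCard.1 hs).1).map_finsetSort]
  simp [wordMonomial, map_list_prod, Function.comp_def]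

end ElemPolyOn

section Rotation

variable (K : Type*) [Field K]

theorem commute_mkR_ι_elemPoly {n : ℕ} (i : Fin n) (k : ℕ) :
    Commute (mkR K n (FreeAlgebra.ι K i)) (mkR K n (elemPoly K n k)) := by
  rcases Nat.eq_zero_or_pos k with rfl | hk
  · simp [elemPoly_eq_elemPolyOn_univ]
  rcases le_or_gt k n with hkn | hnk
  · have h := RingQuot.mkAlgHom_rel K (show commRel K n _ _ from ⟨i, k, hk, hkn, rfl, rfl⟩)
    rwa [map_mul, map_mul] at h
  · rw [elemPoly_eq_elemPolyOn_univ, elemPolyOn_of_card_lt K (by simpa), map_zero]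
    exact Commute.zero_right _

variable {m : ℕ}

theorem elemPoly_succ_eq_elemPolyOn_erase_zero (j : ℕ) :
    elemPoly K (m + 1) (j + 1) = elemPolyOn K (univ.erase 0) (j + 1) +
      FreeAlgebra.ι K 0 * elemPolyOn K (univ.erase 0) j := by
  rw [elemPoly_eq_elemPolyOn_univ, ← elemPolyOn_insert_of_forall_gt K
    fun b hb => Fin.pos_iff_ne_zero.2 (ne_of_mem_erase hb), insert_erase (mem_univ 0)]

theorem elemPoly_succ_eq_elemPolyOn_erase_last (j : ℕ) :
    elemPoly K (m + 1) (j + 1) = elemPolyOn K (univ.erase (Fin.last m)) (j + 1) +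
      elemPolyOn K (univ.erase (Fin.last m)) j * FreeAlgebra.ι K (Fin.last m) := by
  rw [elemPoly_eq_elemPolyOn_univ, ← elemPolyOn_insert_of_forall_lt K
    fun b hb => Fin.lt_last_iff_ne_last.2 (ne_of_mem_erase hb), insert_erase (mem_univ _)]

theorem rotHom_elemPolyOn_erase_last (j : ℕ) :
    rotHom K (m + 1) (elemPolyOn K (univ.erase (Fin.last m)) j) =
      elemPolyOn K (univ.erase 0) j := by
  have hmono : StrictMonoOn (finRotate (m + 1)) (univ.erase (Fin.last m) : Finset _) := by
    intro a ha b hb hab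
    simp only [coe_erase, coe_univ, Set.mem_sdiff, Set.mem_singleton_iff] at ha hb
    rw [Fin.lt_def, coe_finRotate_of_ne_last ha.2, coe_finRotate_of_ne_last hb.2]
    exact Nat.succ_lt_succ hab
  have himage : (univ.erase (Fin.last m)).map (finRotate (m + 1)).toEmbedding = univ.erase 0 := by
    rw [map_erase, map_univ_equiv, Equiv.coe_toEmbedding, finRotate_last]
  rw [← himage, ← lift_elemPolyOn_map K _ hmono]
  rfl

theorem commute_mkR_ι_zero_elemPolyOn_erase_zero (j : ℕ) :
    Commute (mkR K (m + 1) (FreeAlgebra.ι K 0))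
      (mkR K (m + 1) (elemPolyOn K (univ.erase 0) j)) := by
  induction j with
  | zero => simp
  | succ j ih =>
    rw [eq_sub_of_add_eq (elemPoly_succ_eq_elemPolyOn_erase_zero K j).symm, map_sub, map_mul]
    exact (commute_mkR_ι_elemPoly K 0 (j + 1)).sub_right ((Commute.refl _).mul_right ih)

theorem mkR_rotHom_elemPoly (n k : ℕ) :
    mkR K n (rotHom K n (elemPoly K n k)) = mkR K n (elemPoly K n k) := by
  obtain _ | m := n
  · rw [show rotHom K 0 = AlgHom.id K _ from FreeAlgebra.hom_ext (funext fun i => i.elim0)]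
    rfl
  obtain _ | j := k
  · simp [elemPoly_eq_elemPolyOn_univ]
  have hlast : rotHom K (m + 1) (FreeAlgebra.ι K (Fin.last m)) = FreeAlgebra.ι K 0 := by
    simp [rotHom]
  set F := elemPolyOn K (univ.erase (0 : Fin (m + 1)))
  calc mkR K (m + 1) (rotHom K (m + 1) (elemPoly K (m + 1) (j + 1)))
      = mkR K (m + 1) (F (j + 1) + F j * FreeAlgebra.ι K 0) := by
        rw [elemPoly_succ_eq_elemPolyOn_erase_last, map_add, map_mul,
          rotHom_elemPolyOn_erase_last, rotHom_elemPolyOn_erase_last, hlast]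
    _ = mkR K (m + 1) (F (j + 1) + FreeAlgebra.ι K 0 * F j) := by
        rw [map_add, map_add, map_mul, map_mul, (commute_mkR_ι_zero_elemPolyOn_erase_zero K j).eq]
    _ = mkR K (m + 1) (elemPoly K (m + 1) (j + 1)) := by
        rw [elemPoly_succ_eq_elemPolyOn_erase_zero]

end Rotation

section Orbit

variable (K : Type*) [Field K] (n : ℕ)

noncomputable def rotR : Rquot K n →ₐ[K] Rquot K n :=
  RingQuot.liftAlgHom K ⟨(mkR K n).comp (rotHom K n), by
    rintro _ _ ⟨i, k, -, -, rfl, rfl⟩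
    simp only [AlgHom.comp_apply, map_mul, mkR_rotHom_elemPoly]
    simpa [rotHom] using (commute_mkR_ι_elemPoly K (finRotate n i) k).eq⟩

theorem rotR_mkR (x : FreeAlgebra K (Fin n)) : rotR K n (mkR K n x) = mkR K n (rotHom K n x) :=
  RingQuot.liftAlgHom_mkAlgHom_apply _ _ _ _

theorem mkR_rotHom_iterate_elemPoly (k m : ℕ) :
    mkR K n ((rotHom K n)^[m] (elemPoly K n k)) = mkR K n (elemPoly K n k) := by
  have hsemi : Function.Semiconj (mkR K n) (rotHom K n) (rotR K n) :=
    fun x => (rotR_mkR K n x).symm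
  rw [hsemi.iterate_right m,
    Function.iterate_fixed ((rotR_mkR K n _).trans (mkR_rotHom_elemPoly K n k))]

theorem sum_rotHom_iterate_elemPoly (k : ℕ) :
    ∑ m ∈ range n, (rotHom K n)^[m] (elemPoly K n k) =
      ∑ T ∈ univ.powersetCard k, orbitPoly K n T.sort := by
  simp only [elemPoly_eq_elemPolyOn_univ, elemPolyOn, orbitPoly, ← AlgHom.coe_pow, map_sum]
  exact sum_comm

end Orbit

section ShiftMinToZero

variable {n : ℕ}

def shiftMinToZero (T : Finset (Fin n)) : Finset (Fin n) :=
  if h : T.Nonempty then T.image (· - T.min' h) else T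

variable [NeZero n]

theorem shiftMinToZero_of_zero_mem {S : Finset (Fin n)} (h : 0 ∈ S) : shiftMinToZero S = S := by
  have hmin : S.min' ⟨0, h⟩ = 0 := le_antisymm (S.min'_le 0 h) (Fin.zero_le _)
  rw [shiftMinToZero, dif_pos ⟨0, h⟩, hmin]
  simp

theorem card_shiftMinToZero (T : Finset (Fin n)) : (shiftMinToZero T).card = T.card := by
  unfold shiftMinToZero
  split_ifs
  exacts [card_image_of_injective _ sub_left_injective, rfl]

theorem zero_mem_shiftMinToZero {T : Finset (Fin n)} (h : T.Nonempty) :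
    0 ∈ shiftMinToZero T := by
  rw [shiftMinToZero, dif_pos h]
  exact mem_image.2 ⟨_, T.min'_mem h, sub_self _⟩

theorem image_shiftMinToZero_powersetCard {k : ℕ} (hk : k ≠ 0) :
    ((univ : Finset (Fin n)).powersetCard k).image shiftMinToZero =
      {S ∈ (univ : Finset (Fin n)).powersetCard k | 0 ∈ S} := by
  ext S
  simp only [mem_image, mem_filter, mem_powersetCard_univ]
  constructor
  · rintro ⟨T, rfl, rfl⟩
    exact ⟨card_shiftMinToZero T, zero_mem_shiftMinToZero (card_ne_zero.1 hk)⟩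
  · rintro ⟨hS, h0⟩
    exact ⟨S, hS, shiftMinToZero_of_zero_mem h0⟩

variable (K : Type*) [Field K]

theorem orbitPoly_sort_shiftMinToZero (T : Finset (Fin n)) :
    orbitPoly K n (shiftMinToZero T).sort = orbitPoly K n T.sort := by
  unfold shiftMinToZero
  split_ifs with h
  · set m := T.min' h
    have hmono : StrictMonoOn (Equiv.subRight m).toEmbedding (T : Set (Fin n)) := by
      intro a ha b hb hab
      have hma := T.min'_le a ha
      simp only [Equiv.coe_toEmbedding, Equiv.subRight_apply]
      rw [Fin.lt_def, Fin.sub_val_of_le hma, Fin.sub_val_of_le (T.min'_le b hb)]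
      exact Nat.sub_lt_sub_right (Fin.le_def.1 hma) hab
    have himage : T.image (· - m) = T.map (Equiv.subRight m).toEmbedding :=
      (map_eq_image (Equiv.subRight m).toEmbedding T).symm
    rw [himage, ← hmono.map_finsetSort]
    have hsub : ⇑(Equiv.subRight m).toEmbedding = (· + -m) := funext fun a => sub_eq_add_neg a m
    rw [hsub, orbitPoly_map_add]
  · rfl

theorem sum_orbitPoly_powersetCard {k : ℕ} (hk : k ≠ 0) :
    ∑ T ∈ univ.powersetCard k, orbitPoly K n T.sort =
      ∑ S ∈ univ.powersetCard k with 0 ∈ S,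
        #{T ∈ univ.powersetCard k | shiftMinToZero T = S} • orbitPoly K n S.sort := by
  rw [sum_congr rfl fun T _ => (orbitPoly_sort_shiftMinToZero K T).symm,
    sum_comp (fun S : Finset (Fin n) => orbitPoly K n (S.sort (· ≤ ·))) shiftMinToZero,
    image_shiftMinToZero_powersetCard hk]

end ShiftMinToZero

/-- For each `1 ≤ k ≤ n` there are positive integers `α_S`, indexed by the
`k`-element subsets `S` of the index set containing the first index, such that
in `R′` one has `n·σ_k = ∑_S α_S · \overline{x_{w(S)}}`, where `w(S)` lists the
elements of `S` in increasing order. -/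
theorem n_smul_elemPoly_eq_sum_orbitPolys
    (K : Type*) [Field K] (n : ℕ) (hn : 3 ≤ n)
    (k : ℕ) (hk : 1 ≤ k) :
    ∃ α : Finset (Fin n) → ℕ,
      (∀ S : Finset (Fin n), S.card = k → (⟨0, by omega⟩ : Fin n) ∈ S → 0 < α S) ∧
      (n : Rquot K n) * mkR K n (elemPoly K n k) =
        ∑ S ∈ (Finset.univ.powersetCard k).filter (fun S => (⟨0, by omega⟩ : Fin n) ∈ S),
          (α S : Rquot K n) * mkR K n (orbitPoly K n (S.sort (· ≤ ·))) := by
  have : NeZero n := ⟨by omega⟩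
  refine ⟨fun S => #{T ∈ univ.powersetCard k | shiftMinToZero T = S}, fun S hS h0 => ?_, ?_⟩
  · exact card_pos.2
      ⟨S, mem_filter.2 ⟨mem_powersetCard_univ.2 hS, shiftMinToZero_of_zero_mem h0⟩⟩
  calc (n : Rquot K n) * mkR K n (elemPoly K n k)
      = mkR K n (∑ m ∈ range n, (rotHom K n)^[m] (elemPoly K n k)) := by
        rw [map_sum, sum_congr rfl fun m _ => mkR_rotHom_iterate_elemPoly K n k m, sum_const,
          card_range, nsmul_eq_mul]
    _ = _ := by
        rw [sum_rotHom_iterate_elemPoly, sum_orbitPoly_powersetCard K (by omega), map_sum]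
        exact sum_congr rfl fun S _ => by rw [map_nsmul, nsmul_eq_mul]
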